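/- arXiv:2310.17603 — 6 statements merged into one kernel-verified Lean document; each statement's English description precedes it below -/
import Mathlib

section
/- (Lower bound on Λ.) Let p be a positive integer and θ, α ∈ ℝ. Let θ₀ ∈ Θ_α satisfy |θ − θ₀|_{2π} ≤ |θ − χ|_{2π} for every χ ∈ Θ_α, and let θ* ∈ Θ* satisfy |θ₀ − θ*|_{2π} ≤ |θ₀ − χ|_{2π} for every χ ∈ Θ*. Then (p²/8) · |θ − θ₀|_{2π} · |θ − θ*|_{2π} ≤ |Λ(θ,α)|. -/
open Real

/-- `Λ(θ,α) := cos(pθ) - (-1)^p cos(pα)` for real arguments. -/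
noncomputable def Lam (p : ℕ) (α θ : ℝ) : ℝ :=
  Real.cos ((p : ℝ) * θ) - (-1 : ℝ) ^ p * Real.cos ((p : ℝ) * α)

/-- The 2π-periodic distance `|x|_{2π} := min_{n ∈ ℤ} |x + 2nπ|`. -/
noncomputable def dist2pi (x : ℝ) : ℝ :=
  sInf {d : ℝ | ∃ n : ℤ, d = |x + 2 * (n : ℝ) * π|}

/-!
With `β = α + π` we have `Λ(θ,α) = cos pθ - cos pβ = -2 sin (p(θ+β)/2) sin (p(θ-β)/2)`, so
`|Λ| = 2 sin (A/2) sin (B/2)` with `A = |pθ - pβ|_{2π}` and `B = |pθ + pβ|_{2π}`.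
Rescaling the nearest representatives of `pθ ∓ pβ` gives zeros of `Λ` at distance `A/p` and
`B/p` from `θ`, so `a := p|θ - θ₀|_{2π} ≤ min A B`. As `cos pθ₀ = cos pβ`, the quantity
`δ := |2pθ₀|_{2π}/2` equals `|2pβ|_{2π}/2 ≤ (A + B)/2`, and rescaling the nearest representative
of `2pθ₀` gives a point of `Θ*` within `δ/p` of `θ₀`; hence `p|θ - θ*|_{2π} ≤ a + δ`.
It remains to show `a(a + δ)/8 ≤ 2 sin (A/2) sin (B/2)`, which follows from Jordan's inequality
`sin (A/2) ≥ A/π` and the bound `sin (B/2) ≥ π/16 · (B + min B (π/2))` on `[0, π]`.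
-/

lemma dist2pi_le_abs_add (x : ℝ) (n : ℤ) : dist2pi x ≤ |x + 2 * n * π| :=
  csInf_le ⟨0, by rintro d ⟨m, rfl⟩; positivity⟩ ⟨n, rfl⟩

lemma dist2pi_le_abs (x : ℝ) : dist2pi x ≤ |x| := by
  simpa using dist2pi_le_abs_add x 0

lemma Real.Angle.norm_coe_eq_abs_add (x : ℝ) :
    ‖(x : Real.Angle)‖ = |x + 2 * ((-round ((2 * π)⁻¹ * x) : ℤ) : ℝ) * π| := by
  rw [show ‖(x : Real.Angle)‖ = _ from AddCircle.norm_eq (2 * π)]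
  push_cast
  ring_nf

lemma dist2pi_eq_norm (x : ℝ) : dist2pi x = ‖(x : Real.Angle)‖ := by
  refine le_antisymm ((dist2pi_le_abs_add x _).trans_eq (Real.Angle.norm_coe_eq_abs_add x).symm)
    (le_csInf ⟨_, 0, rfl⟩ ?_)
  rintro d ⟨n, rfl⟩
  have h : ((x + 2 * n * π : ℝ) : Real.Angle) = x :=
    Real.Angle.angle_eq_iff_two_pi_dvd_sub.2 ⟨n, by ring⟩
  rw [← h]
  exact QuotientAddGroup.norm_mk_le_norm

lemma exists_dist2pi_eq_abs_add (x : ℝ) : ∃ n : ℤ, dist2pi x = |x + 2 * n * π| :=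
  ⟨_, (dist2pi_eq_norm x).trans (Real.Angle.norm_coe_eq_abs_add x)⟩

lemma dist2pi_nonneg (x : ℝ) : 0 ≤ dist2pi x :=
  (dist2pi_eq_norm x).trans_ge (norm_nonneg _)

lemma dist2pi_le_pi (x : ℝ) : dist2pi x ≤ π := by
  have h := AddCircle.norm_le_half_period (2 * π) (x := (x : AddCircle (2 * π))) two_pi_pos.ne'
  rw [abs_of_pos two_pi_pos, mul_div_cancel_left₀ _ two_ne_zero] at h
  exact (dist2pi_eq_norm x).trans_le h

lemma dist2pi_sub_comm (x y : ℝ) : dist2pi (x - y) = dist2pi (y - x) := by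
  simp only [dist2pi_eq_norm, Real.Angle.coe_sub, norm_sub_rev]

lemma dist2pi_sub_le (x y : ℝ) : dist2pi (x - y) ≤ dist2pi x + dist2pi y := by
  simpa only [dist2pi_eq_norm, Real.Angle.coe_sub] using norm_sub_le (x : Real.Angle) y

lemma dist2pi_eq_arccos_cos (x : ℝ) : dist2pi x = arccos (cos x) := by
  obtain ⟨n, hn⟩ := exists_dist2pi_eq_abs_add x
  have hcos : cos x = cos |x + 2 * n * π| := by
    rw [cos_abs, show x + 2 * n * π = x + n * (2 * π) by ring, cos_add_int_mul_two_pi]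
  rw [hcos, arccos_cos (abs_nonneg _) (hn ▸ dist2pi_le_pi x), hn]

lemma dist2pi_eq_of_cos_eq {x y : ℝ} (h : cos x = cos y) : dist2pi x = dist2pi y := by
  rw [dist2pi_eq_arccos_cos, dist2pi_eq_arccos_cos, h]

lemma dist2pi_two_mul_eq_of_cos_eq {x y : ℝ} (h : cos x = cos y) :
    dist2pi (2 * x) = dist2pi (2 * y) :=
  dist2pi_eq_of_cos_eq (by rw [cos_two_mul, cos_two_mul, h])

lemma sin_half_dist2pi (x : ℝ) : sin (dist2pi x / 2) = |sin (x / 2)| := by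
  have hcos : cos (dist2pi x) = cos x := by
    rw [dist2pi_eq_arccos_cos, cos_arccos (neg_one_le_cos x) (cos_le_one x)]
  rw [sin_half_eq_sqrt (dist2pi_nonneg x) (by linarith [dist2pi_le_pi x, pi_pos]), hcos,
    abs_sin_half]

lemma exists_mul_dist2pi_sub_div_le {c : ℝ} (hc : 0 < c) (θ z : ℝ) :
    ∃ n : ℤ, c * dist2pi (θ - (z + 2 * n * π) / c) ≤ dist2pi (c * θ - z) := by
  obtain ⟨n, hn⟩ := exists_dist2pi_eq_abs_add (c * θ - z)
  refine ⟨-n, ?_⟩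
  calc c * dist2pi (θ - (z + 2 * (-n : ℤ) * π) / c)
      ≤ c * |θ - (z + 2 * (-n : ℤ) * π) / c| := by gcongr; exact dist2pi_le_abs _
    _ = |c * θ - z + 2 * n * π| := by
      rw [← abs_of_pos hc, ← abs_mul, abs_of_pos hc]
      congr 1
      field_simp
      push_cast
      ring
    _ = dist2pi (c * θ - z) := hn.symm

lemma pi_div_sixteen_mul_le_sin_half {B : ℝ} (hB0 : 0 ≤ B) (hB : B ≤ π) :
    π / 16 * (B + min B (π / 2)) ≤ sin (B / 2) := by
  rcases le_total B (π / 2) with h | h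
  · rw [min_eq_left h]
    rcases hB0.eq_or_lt with rfl | hB0
    · simp
    have hc := sin_gt_sub_cube (half_pos hB0)
    nlinarith [pi_lt_d2, pi_gt_three, sq_nonneg B]
  · rw [min_eq_right h]
    have hc : 1 - (π / 2 - B / 2) ^ 2 / 2 ≤ cos (π / 2 - B / 2) := one_sub_sq_div_two_le_cos
    rw [cos_pi_div_two_sub] at hc
    nlinarith [pi_lt_d2, pi_gt_three,
      mul_nonneg (by linarith : 0 ≤ π / 4 - (π / 2 - B / 2)) (by linarith : 0 ≤ π / 2 - B / 2)]

lemma mul_add_le_two_mul_sin_half_mul_sin_half {a δ A B : ℝ} (ha : 0 ≤ a) (haA : a ≤ A)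
    (haB : a ≤ B) (hA : A ≤ π) (hB : B ≤ π) (hδ : δ ≤ π / 2) (hδAB : 2 * δ ≤ A + B) :
    a * (a + δ) / 8 ≤ 2 * sin (A / 2) * sin (B / 2) := by
  wlog hAB : A ≤ B generalizing A B
  · linarith [this haB haA hB hA (by linarith) (by linarith)]
  have hsA : a / π ≤ sin (A / 2) :=
    calc a / π ≤ A / π := by gcongr
      _ = 2 / π * (A / 2) := by ring
      _ ≤ sin (A / 2) := mul_le_sin (by linarith) (by linarith)
  have hB0 : 0 ≤ B := ha.trans haB
  have hδB : a + δ ≤ B + min B (π / 2) := by linarith [le_min (by linarith : δ ≤ B) hδ]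
  calc a * (a + δ) / 8 ≤ a * (B + min B (π / 2)) / 8 := by gcongr
    _ = 2 * (a / π) * (π / 16 * (B + min B (π / 2))) := by field_simp; ring
    _ ≤ 2 * sin (A / 2) * sin (B / 2) :=
      mul_le_mul (by linarith) (pi_div_sixteen_mul_le_sin_half hB0 hB)
        (mul_nonneg (by positivity) (add_nonneg hB0 (le_min hB0 (by positivity))))
        (by linarith [sin_nonneg_of_nonneg_of_le_pi (by linarith : 0 ≤ A / 2) (by linarith)])

lemma Lam_eq_cos_sub_cos (p : ℕ) (α x : ℝ) : Lam p α x = cos (p * x) - cos (p * (α + π)) := by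
  rw [Lam, mul_add, ← zpow_natCast, ← cos_add_int_mul_pi, Int.cast_natCast]

lemma abs_Lam_eq (p : ℕ) (α θ : ℝ) :
    |Lam p α θ| = 2 * sin (dist2pi (p * θ - p * (α + π)) / 2)
      * sin (dist2pi (p * θ + p * (α + π)) / 2) := by
  rw [sin_half_dist2pi, sin_half_dist2pi, Lam_eq_cos_sub_cos, cos_sub_cos, abs_mul, abs_mul]
  norm_num
  ring

lemma dist2pi_two_mul_mul_le_of_Lam_eq_zero {p : ℕ} {α θ₀ : ℝ} (hθ₀ : Lam p α θ₀ = 0) (θ : ℝ) :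
    dist2pi (2 * p * θ₀) ≤ dist2pi (p * θ - p * (α + π)) + dist2pi (p * θ + p * (α + π)) := by
  have hcos : cos (p * θ₀) = cos (p * (α + π)) := by
    rwa [Lam_eq_cos_sub_cos, sub_eq_zero] at hθ₀
  calc dist2pi (2 * p * θ₀) = dist2pi ((p * θ + p * (α + π)) - (p * θ - p * (α + π))) := by
        rw [mul_assoc, dist2pi_two_mul_eq_of_cos_eq hcos]; ring_nf
    _ ≤ _ := by linarith [dist2pi_sub_le (p * θ + p * (α + π)) (p * θ - p * (α + π))]

section NearestPoints

variable {p : ℕ} {α θ θ₀ θs : ℝ}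

lemma mul_dist2pi_le_of_nearest_zero (hp : 0 < p)
    (hθ₀ : ∀ χ, Lam p α χ = 0 → dist2pi (θ - θ₀) ≤ dist2pi (θ - χ)) {z : ℝ}
    (hz : cos z = cos (p * (α + π))) : p * dist2pi (θ - θ₀) ≤ dist2pi (p * θ - z) := by
  have hp' : (0 : ℝ) < p := Nat.cast_pos.2 hp
  obtain ⟨n, hn⟩ := exists_mul_dist2pi_sub_div_le hp' θ z
  refine le_trans (mul_le_mul_of_nonneg_left (hθ₀ _ ?_) hp'.le) hn
  rw [Lam_eq_cos_sub_cos, mul_div_cancel₀ _ hp'.ne', ← hz,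
    show z + 2 * n * π = z + n * (2 * π) by ring, cos_add_int_mul_two_pi, sub_self]

lemma two_mul_mul_dist2pi_le_of_nearest_coalescence (hp : 0 < p)
    (hθs : ∀ χ, (∃ n : ℤ, χ = n * π / p) → dist2pi (θ₀ - θs) ≤ dist2pi (θ₀ - χ)) :
    2 * p * dist2pi (θ₀ - θs) ≤ dist2pi (2 * p * θ₀) := by
  have hp' : (0 : ℝ) < 2 * p := by positivity
  obtain ⟨n, hn⟩ := exists_mul_dist2pi_sub_div_le hp' θ₀ 0
  rw [sub_zero] at hn
  refine le_trans (mul_le_mul_of_nonneg_left (hθs _ ⟨n, ?_⟩) hp'.le) hn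
  field_simp
  ring

end NearestPoints

theorem lower_bound_on_Lam_general
    (p : ℕ) (hp : 0 < p) (θ α θ₀ θs : ℝ)
    (hθ₀mem : Lam p α θ₀ = 0)
    (hθ₀min : ∀ χ : ℝ, Lam p α χ = 0 → dist2pi (θ - θ₀) ≤ dist2pi (θ - χ))
    (hθsmin : ∀ χ : ℝ, (∃ n : ℤ, χ = (n : ℝ) * π / p) →
      dist2pi (θ₀ - θs) ≤ dist2pi (θ₀ - χ)) :
    (p : ℝ) ^ 2 / 8 * dist2pi (θ - θ₀) * dist2pi (θ - θs) ≤ |Lam p α θ| := by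
  set β := (p : ℝ) * (α + π)
  have ha : 0 ≤ p * dist2pi (θ - θ₀) := mul_nonneg (Nat.cast_nonneg p) (dist2pi_nonneg _)
  have haA : p * dist2pi (θ - θ₀) ≤ dist2pi (p * θ - β) :=
    mul_dist2pi_le_of_nearest_zero hp hθ₀min rfl
  have haB : p * dist2pi (θ - θ₀) ≤ dist2pi (p * θ + β) := by
    simpa using mul_dist2pi_le_of_nearest_zero hp hθ₀min (z := -β) (cos_neg β)
  have hθs : p * dist2pi (θ - θs) ≤ p * dist2pi (θ - θ₀) + dist2pi (2 * p * θ₀) / 2 := by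
    have h := dist2pi_sub_le (θ - θ₀) (θs - θ₀)
    rw [sub_sub_sub_cancel_right, dist2pi_sub_comm θs] at h
    linarith [two_mul_mul_dist2pi_le_of_nearest_coalescence hp hθsmin,
      mul_le_mul_of_nonneg_left h (Nat.cast_nonneg p)]
  calc (p : ℝ) ^ 2 / 8 * dist2pi (θ - θ₀) * dist2pi (θ - θs)
      = (p * dist2pi (θ - θ₀)) * (p * dist2pi (θ - θs)) / 8 := by ring
    _ ≤ (p * dist2pi (θ - θ₀)) * (p * dist2pi (θ - θ₀) + dist2pi (2 * p * θ₀) / 2) / 8 := by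
      gcongr
    _ ≤ 2 * sin (dist2pi (p * θ - β) / 2) * sin (dist2pi (p * θ + β) / 2) :=
      mul_add_le_two_mul_sin_half_mul_sin_half ha haA haB (dist2pi_le_pi _) (dist2pi_le_pi _)
        (by linarith [dist2pi_le_pi (2 * p * θ₀)])
        (by linarith [dist2pi_two_mul_mul_le_of_Lam_eq_zero hθ₀mem θ])
    _ = |Lam p α θ| := (abs_Lam_eq p α θ).symm

theorem lower_bound_on_Lam
    (p : ℕ) (hp : 0 < p) (θ α θ₀ θs : ℝ)
    (hθ₀mem : Lam p α θ₀ = 0)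
    (hθ₀min : ∀ χ : ℝ, Lam p α χ = 0 → dist2pi (θ - θ₀) ≤ dist2pi (θ - χ))
    (hθsmem : ∃ n : ℤ, θs = (n : ℝ) * π / p)
    (hθsmin : ∀ χ : ℝ, (∃ n : ℤ, χ = (n : ℝ) * π / p) →
      dist2pi (θ₀ - θs) ≤ dist2pi (θ₀ - χ)) :
    (p : ℝ) ^ 2 / 8 * dist2pi (θ - θ₀) * dist2pi (θ - θs) ≤ |Lam p α θ| :=
  lower_bound_on_Lam_general p hp θ α θ₀ θs hθ₀mem hθ₀min hθsmin
end

section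
/- (Monotone vertical growth.) Let p be a positive integer and θ, α ∈ ℝ. The function c ↦ |Λ(θ + i c, α)| is nondecreasing on [0,∞): for all real 0 ≤ c₁ ≤ c₂, |Λ(θ + i c₁, α)| ≤ |Λ(θ + i c₂, α)|. -/
open Real

/-- `Λ(z,α) := cos(pz) - (-1)^p cos(pα)` for complex `z` and real `α`. -/
noncomputable def LamC (p : ℕ) (α : ℝ) (z : ℂ) : ℂ :=
  Complex.cos ((p : ℂ) * z) - (-1 : ℂ) ^ p * Complex.cos ((p : ℂ) * (α : ℂ))

/-!
With `x = cosh (p c)` and `A = (-1)^p cos (p α)`, the identity `sinh² = cosh² - 1` gives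
`|Λ(θ + i c, α)|² = x² - 2 A cos (p θ) x + A² - sin² (p θ)`. This quadratic in `x` has its
vertex at `A cos (p θ) ≤ 1 ≤ x`, so it increases with `x`, and `x` increases with `c ≥ 0`.
-/

lemma Complex.normSq_cos_add_mul_I_sub_ofReal (x y a : ℝ) :
    normSq (cos (x + y * I) - a) = Real.cosh y ^ 2 - 2 * a * Real.cos x * Real.cosh y + a ^ 2
      - Real.sin x ^ 2 := by
  rw [cos_add_mul_I, ← ofReal_cos, ← ofReal_cosh, ← ofReal_sin, ← ofReal_sinh, normSq_apply]
  simp only [sub_re, sub_im, mul_re, mul_im, ofReal_re, ofReal_im, I_re, I_im]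
  linear_combination
    -(Real.sin x ^ 2) * Real.cosh_sq y + Real.cosh y ^ 2 * Real.sin_sq_add_cos_sq x

lemma normSq_LamC (p : ℕ) (α θ c : ℝ) :
    Complex.normSq (LamC p α (θ + c * Complex.I)) =
      cosh (p * c) ^ 2 - 2 * ((-1) ^ p * cos (p * α)) * cos (p * θ) * cosh (p * c)
        + ((-1) ^ p * cos (p * α)) ^ 2 - sin (p * θ) ^ 2 := by
  rw [← Complex.normSq_cos_add_mul_I_sub_ofReal, LamC]
  push_cast
  ring_nf

lemma sq_sub_two_mul_le_sq_sub_two_mul {b u v : ℝ} (hb : b ≤ 1) (hu : 1 ≤ u) (huv : u ≤ v) :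
    u ^ 2 - 2 * b * u ≤ v ^ 2 - 2 * b * v := by
  nlinarith

theorem abs_Lam_monotone_vertical_general (p : ℕ) (θ α : ℝ)
    (c₁ c₂ : ℝ) (hc₁ : 0 ≤ c₁) (hc₁₂ : c₁ ≤ c₂) :
    ‖LamC p α ((θ : ℂ) + c₁ * Complex.I)‖
      ≤ ‖LamC p α ((θ : ℂ) + c₂ * Complex.I)‖ := by
  rw [Complex.norm_def, Complex.norm_def]
  refine Real.sqrt_le_sqrt ?_
  simp only [normSq_LamC]
  have hcosh : cosh (p * c₁) ≤ cosh (p * c₂) := by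
    rw [Real.cosh_le_cosh, abs_of_nonneg (by positivity),
      abs_of_nonneg (by have := hc₁.trans hc₁₂; positivity)]
    gcongr
  have hb : (-1) ^ p * cos (p * α) * cos (p * θ) ≤ 1 := by
    calc _ ≤ |(-1) ^ p * cos (p * α) * cos (p * θ)| := le_abs_self _
      _ = |cos (p * α)| * |cos (p * θ)| := by simp [abs_mul]
      _ ≤ 1 := mul_le_one₀ (abs_cos_le_one _) (abs_nonneg _) (abs_cos_le_one _)
  linarith [sq_sub_two_mul_le_sq_sub_two_mul hb (Real.one_le_cosh _) hcosh]

theorem abs_Lam_monotone_vertical (p : ℕ) (hp : 0 < p) (θ α : ℝ)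
    (c₁ c₂ : ℝ) (hc₁ : 0 ≤ c₁) (hc₁₂ : c₁ ≤ c₂) :
    ‖LamC p α ((θ : ℂ) + c₁ * Complex.I)‖
      ≤ ‖LamC p α ((θ : ℂ) + c₂ * Complex.I)‖ :=
  abs_Lam_monotone_vertical_general p θ α c₁ c₂ hc₁ hc₁₂
end

section
/- Let p be a positive integer, set c := ln(3 + π²/64)/p. Then for all θ, α ∈ ℝ, |Λ(θ + i c, α)| ≥ π²/128. -/
open Real

/-!
Since `|cos (x + iy)|² = cos² x + sinh² y ≥ sinh² y` and `|(-1)^p cos(pα)| ≤ 1`, on the line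
`Im z = c` we get `|Λ(z, α)| ≥ sinh (p c) - 1 = (A - A⁻¹)/2 - 1` with `A = 3 + π²/64 ≥ 3`, which is
at least `1/3 > π²/128`.
-/

namespace Complex

theorem normSq_cos (z : ℂ) : normSq (cos z) = Real.cos z.re ^ 2 + Real.sinh z.im ^ 2 := by
  rw [cos_eq, ← ofReal_cos, ← ofReal_cosh, ← ofReal_sin, ← ofReal_sinh, normSq_apply]
  simp only [sub_re, sub_im, mul_re, mul_im, ofReal_re, ofReal_im, I_re, I_im]
  linear_combination Real.cos z.re ^ 2 * Real.cosh_sq z.im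
    + Real.sinh z.im ^ 2 * Real.sin_sq_add_cos_sq z.re

theorem abs_sinh_im_le_norm_cos (z : ℂ) : |Real.sinh z.im| ≤ ‖cos z‖ := by
  rw [← sqrt_sq_eq_abs, norm_def, normSq_cos]
  exact Real.sqrt_le_sqrt (le_add_of_nonneg_left (sq_nonneg _))

theorem norm_cos_ofReal_le_one (x : ℝ) : ‖cos x‖ ≤ 1 := by
  rw [← ofReal_cos, norm_real, Real.norm_eq_abs]
  exact Real.abs_cos_le_one x

end Complex

theorem sinh_mul_im_sub_one_le_norm_LamC (p : ℕ) (α : ℝ) (z : ℂ) :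
    Real.sinh (p * z.im) - 1 ≤ ‖LamC p α z‖ := by
  have hcos : Real.sinh (p * z.im) ≤ ‖Complex.cos (p * z)‖ := by
    simpa using (le_abs_self _).trans (Complex.abs_sinh_im_le_norm_cos (p * z))
  have hconst : ‖(-1 : ℂ) ^ p * Complex.cos (p * α)‖ ≤ 1 := by
    simpa [← Complex.ofReal_natCast, ← Complex.ofReal_mul] using
      Complex.norm_cos_ofReal_le_one (p * α)
  unfold LamC
  linarith [norm_sub_norm_le (Complex.cos (p * z)) ((-1 : ℂ) ^ p * Complex.cos (p * α))]

theorem abs_Lam_on_horizontal_line_ge (p : ℕ) (hp : 0 < p) (θ α : ℝ)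
    (c : ℝ) (hc : c = Real.log (3 + π ^ 2 / 64) / p) :
    π ^ 2 / 128 ≤ ‖LamC p α ((θ : ℂ) + c * Complex.I)‖ := by
  set A : ℝ := 3 + π ^ 2 / 64
  have hA : 3 ≤ A := le_add_of_nonneg_right (by positivity)
  have hAinv : A⁻¹ ≤ 1 / 3 := by
    rw [inv_eq_one_div]; exact one_div_le_one_div_of_le (by norm_num) hA
  have hsinh : Real.sinh (p * c) = (A - A⁻¹) / 2 := by
    rw [hc, mul_div_cancel₀ _ (Nat.cast_ne_zero.mpr hp.ne'), Real.sinh_log (by linarith)]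
  have him : ((θ : ℂ) + c * Complex.I).im = c := by simp
  calc π ^ 2 / 128 ≤ 1 / 3 := by nlinarith [pi_pos, pi_lt_four]
    _ ≤ (A - A⁻¹) / 2 - 1 := by linarith
    _ = Real.sinh (p * ((θ : ℂ) + c * Complex.I).im) - 1 := by rw [him, hsinh]
    _ ≤ ‖LamC p α ((θ : ℂ) + c * Complex.I)‖ := sinh_mul_im_sub_one_le_norm_LamC p α _
end

section
/- (Existence of good vertical contour abscissae.) Let p be a positive integer and θ, α ∈ ℝ. Then there exist real numbers z₋ < θ < z₊ with z₊ − z₋ ≤ 5π/(2p) such that: (i) |z₋ − χ| ≥ π/(4p) and |z₊ − χ| ≥ π/(4p) for every χ ∈ Θ_α and every χ ∈ Θ*; (ii) |z₋ − θ| ≥ π/(4p) and |z₊ − θ| ≥ π/(4p); and consequently (iii) for every c ∈ ℝ and every z ∈ {z₋, z₊}, |Λ(z + i c, α)| · |z + i c − θ| ≥ π³/(512 p). -/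
/-!
In the variable `u = p z`, and with `γ ∈ [0, π]` such that `cos γ = (-1)^p cos (p α)`, one has
`Λ = cos u - cos γ = -2 sin ((u + γ)/2) sin ((u - γ)/2)`, and the points to avoid form the set
`πℤ ∪ (±γ + 2πℤ)`. This set is `2π`-periodic and symmetric, so one point `c ∈ [π/4, 3π/4]` at
distance `≥ π/4` from it (the midpoint of the longer of the gaps `(0, γ)`, `(γ, π)`) gives the good
points `±c + 2πℤ`; their consecutive gaps lie in `[π/2, 3π/2]`, so two of them bracket
`[pθ - π/4, pθ + π/4]` within `2π`. At a good point both half-angles are `π/8` away from `πℤ`, so by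
Jordan's inequality and `|sin (x + iy)| ≥ |sin x|` each sine factor has modulus `≥ 1/4` on the whole
vertical line, whence `|Λ| ≥ 1/8`, while `|z + ic - θ| ≥ |z - θ| ≥ π/(4p)`.
-/

open Real

lemma exists_two_div_pi_mul_abs_sub_le_abs_sin (x : ℝ) :
    ∃ k : ℤ, 2 / π * |x - k * π| ≤ |sin x| := by
  refine ⟨round (x / π), ?_⟩
  set y := x - round (x / π) * π
  have hy : |y| ≤ π / 2 := by
    have : y = (x / π - round (x / π)) * π := by rw [sub_mul, div_mul_cancel₀ _ pi_ne_zero]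
    rw [this, abs_mul, abs_of_pos pi_pos]
    nlinarith [abs_sub_round (x / π), pi_pos]
  have hsin : |sin x| = |sin y| := by
    rw [sin_sub_int_mul_pi, abs_mul, abs_zpow, abs_neg, abs_one, one_zpow, one_mul]
  have habs : sin |y| ≤ |sin y| := by
    rcases abs_cases y with ⟨h, -⟩ | ⟨h, -⟩ <;> rw [h]
    · exact le_abs_self _
    · rw [sin_neg]; exact neg_le_abs _
  rw [hsin]
  exact (mul_le_sin (abs_nonneg y) hy).trans habs

lemma Complex.abs_sin_re_le_norm_sin (w : ℂ) : |Real.sin w.re| ≤ ‖Complex.sin w‖ :=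
  calc |Real.sin w.re| ≤ |Real.sin w.re| * Real.cosh w.im :=
        le_mul_of_one_le_right (abs_nonneg _) (one_le_cosh _)
    _ = |(Complex.sin w).re| := by
        rw [← Complex.re_add_im w, Complex.sin_add_mul_I]
        simp [Complex.sin_ofReal_re, Complex.cosh_ofReal_re, abs_mul, abs_of_pos (cosh_pos _)]
    _ ≤ ‖Complex.sin w‖ := Complex.abs_re_le_norm _

lemma le_abs_sub_int_mul {L d x : ℝ} {n : ℤ} (hx₁ : n * L + d ≤ x) (hx₂ : x ≤ (n + 1) * L - d)
    (k : ℤ) : d ≤ |x - k * L| := by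
  rcases le_or_gt d 0 with hd | hd
  · exact hd.trans (abs_nonneg _)
  have hL : 0 ≤ L := by linarith
  rcases le_or_gt k n with hk | hk
  · have : (k : ℝ) * L ≤ n * L := mul_le_mul_of_nonneg_right (by exact_mod_cast hk) hL
    exact le_abs.2 (Or.inl (by linarith))
  · have : ((n : ℝ) + 1) * L ≤ k * L :=
      mul_le_mul_of_nonneg_right (by exact_mod_cast Int.add_one_le_iff.2 hk) hL
    exact le_abs.2 (Or.inr (by linarith))

theorem Function.Periodic.exists_bracket {G : ℝ → Prop} {L d a b : ℝ}
    (hG : Function.Periodic G L) (hL : 0 < L) (hd : 0 ≤ d) (ha : G a) (hb : G b)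
    (hab : d ≤ b - a) (hba : b - a ≤ L - d) (t : ℝ) :
    ∃ x y, G x ∧ G y ∧ x ≤ t - d / 2 ∧ t + d / 2 ≤ y ∧ y - x ≤ L := by
  obtain ⟨k, ⟨hk₁, hk₂⟩, -⟩ := existsUnique_add_zsmul_mem_Ioc hL a (t - d / 2 - L)
  rw [zsmul_eq_mul] at hk₁ hk₂
  have hGa (n : ℤ) : G (a + n * L) := (hG.int_mul n a).symm ▸ ha
  have hGb (n : ℤ) : G (b + n * L) := (hG.int_mul n b).symm ▸ hb
  rcases le_or_gt (b + k * L) (t - d / 2) with h₁ | h₁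
  · rcases le_or_gt (t + d / 2) (a + (k + 1 : ℤ) * L) with h₂ | h₂
    · exact ⟨_, _, hGb k, hGa (k + 1), h₁, h₂, by push_cast; linarith⟩
    · exact ⟨_, _, hGb k, hGb (k + 1), h₁, by push_cast at *; linarith, by push_cast; linarith⟩
  · rcases le_or_gt (t + d / 2) (b + k * L) with h₂ | h₂
    · exact ⟨_, _, hGa k, hGb k, hk₂.trans (by linarith), h₂, by linarith⟩
    · exact ⟨_, _, hGa k, hGa (k + 1), hk₂.trans (by linarith), by push_cast; linarith,
        by push_cast; linarith⟩

/-- In the variable `u = p z`, with `cos γ = (-1)^p cos (p α)`, the zeros of `Λ(·, α)` and the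
coalescence points become the zeros of `cos u - cos γ` and of `sin u`. -/
def IsGoodAbscissa (γ u : ℝ) : Prop :=
  ∀ v : ℝ, sin v = 0 ∨ cos v = cos γ → π / 4 ≤ |u - v|

lemma isGoodAbscissa_periodic (γ : ℝ) : Function.Periodic (IsGoodAbscissa γ) (2 * π) := by
  intro u
  refine propext ⟨fun h v hv => ?_, fun h v hv => ?_⟩
  · simpa using h (v + 2 * π) (by rwa [sin_add_two_pi, cos_add_two_pi])
  · have := h (v - 2 * π) (by rwa [sin_sub_two_pi, cos_sub_two_pi])
    rwa [show u - (v - 2 * π) = u + 2 * π - v by ring] at this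

lemma IsGoodAbscissa.neg {γ u : ℝ} (h : IsGoodAbscissa γ u) : IsGoodAbscissa γ (-u) := by
  intro v hv
  rw [show -u - v = -(u - -v) by ring, abs_neg]
  exact h (-v) (by rwa [sin_neg, cos_neg, neg_eq_zero])

lemma isGoodAbscissa_of_mem_Icc {γ c : ℝ} (hγ : γ ∈ Set.Icc 0 π)
    (hc : c ∈ Set.Icc (π / 4) (3 * π / 4)) (hcγ : π / 4 ≤ |c - γ|) : IsGoodAbscissa γ c := by
  obtain ⟨hγ₀, hγπ⟩ := hγ
  obtain ⟨hc₁, hc₂⟩ := hc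
  rintro v (hv | hv)
  · obtain ⟨k, rfl⟩ := sin_eq_zero_iff.1 hv
    exact le_abs_sub_int_mul (n := 0) (by simp [hc₁]) (by push_cast; linarith) k
  · obtain ⟨k, rfl | rfl⟩ := cos_eq_cos_iff.1 hv.symm
    · rw [show c - (2 * k * π + γ) = c - γ - k * (2 * π) by ring]
      rcases le_abs'.1 hcγ with h | h
      · exact le_abs_sub_int_mul (n := -1) (by push_cast; linarith) (by push_cast; linarith) k
      · exact le_abs_sub_int_mul (n := 0) (by push_cast; linarith) (by push_cast; linarith) k
    · rw [show c - (2 * k * π - γ) = c + γ - k * (2 * π) by ring]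
      exact le_abs_sub_int_mul (n := 0) (by push_cast; linarith) (by push_cast; linarith) k

lemma exists_isGoodAbscissa_mem_Icc {γ : ℝ} (hγ : γ ∈ Set.Icc 0 π) :
    ∃ c ∈ Set.Icc (π / 4) (3 * π / 4), IsGoodAbscissa γ c := by
  obtain ⟨hγ₀, hγπ⟩ := hγ
  rcases le_or_gt γ (π / 2) with h | h
  · refine ⟨(γ + π) / 2, ⟨by linarith, by linarith⟩, isGoodAbscissa_of_mem_Icc ⟨hγ₀, hγπ⟩
      ⟨by linarith, by linarith⟩ (le_abs.2 (Or.inl (by linarith)))⟩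
  · refine ⟨γ / 2, ⟨by linarith, by linarith⟩, isGoodAbscissa_of_mem_Icc ⟨hγ₀, hγπ⟩
      ⟨by linarith, by linarith⟩ (le_abs.2 (Or.inr (by linarith)))⟩

lemma exists_isGoodAbscissa_bracket {γ : ℝ} (hγ : γ ∈ Set.Icc 0 π) (t : ℝ) :
    ∃ x y, IsGoodAbscissa γ x ∧ IsGoodAbscissa γ y ∧ x ≤ t - π / 4 ∧ t + π / 4 ≤ y ∧
      y - x ≤ 2 * π := by
  obtain ⟨c, ⟨hc₁, hc₂⟩, hc⟩ := exists_isGoodAbscissa_mem_Icc hγ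
  have := (isGoodAbscissa_periodic γ).exists_bracket (d := π / 2) (by positivity) (by positivity)
    hc.neg hc (by linarith) (by linarith) t
  simpa only [show π / 2 / 2 = π / 4 by ring] using this

lemma quarter_le_norm_sin_half_sub {w : ℂ} {v : ℝ}
    (h : ∀ k : ℤ, π / 4 ≤ |w.re - (v + 2 * k * π)|) : 1 / 4 ≤ ‖Complex.sin ((w - v) / 2)‖ := by
  obtain ⟨k, hk⟩ := exists_two_div_pi_mul_abs_sub_le_abs_sin ((w.re - v) / 2)
  have hre : ((w - v) / 2).re = (w.re - v) / 2 := by simp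
  have hk' : π / 8 ≤ |(w.re - v) / 2 - k * π| := by
    rw [show (w.re - v) / 2 - k * π = (w.re - (v + 2 * k * π)) / 2 by ring, abs_div, abs_two]
    linarith [h k]
  calc 1 / 4 = 2 / π * (π / 8) := by field_simp; norm_num
    _ ≤ 2 / π * |(w.re - v) / 2 - k * π| := by gcongr
    _ ≤ |sin ((w.re - v) / 2)| := hk
    _ ≤ ‖Complex.sin ((w - v) / 2)‖ := hre ▸ Complex.abs_sin_re_le_norm_sin _

lemma IsGoodAbscissa.one_div_eight_le_norm_cos_sub_cos {γ : ℝ} {w : ℂ}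
    (h : IsGoodAbscissa γ w.re) : 1 / 8 ≤ ‖Complex.cos w - Complex.cos γ‖ := by
  have hcos (v : ℝ) (k : ℤ) : cos (v + 2 * k * π) = cos v := by
    rw [show v + 2 * k * π = v + k * (2 * π) by ring, cos_add_int_mul_two_pi]
  have h_sub : 1 / 4 ≤ ‖Complex.sin ((w - γ) / 2)‖ :=
    quarter_le_norm_sin_half_sub fun k => h _ (Or.inr (hcos γ k))
  have h_add : 1 / 4 ≤ ‖Complex.sin ((w - (-γ : ℝ)) / 2)‖ :=
    quarter_le_norm_sin_half_sub fun k => h _ (Or.inr (by rw [hcos, cos_neg]))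
  rw [Complex.ofReal_neg, sub_neg_eq_add] at h_add
  rw [Complex.cos_sub_cos, norm_mul, norm_mul, norm_neg, Complex.norm_ofNat]
  nlinarith

lemma div_le_abs_div_sub_iff {P d u χ : ℝ} (hP : 0 < P) :
    d / P ≤ |u / P - χ| ↔ d ≤ |u - P * χ| := by
  rw [show u / P - χ = (u - P * χ) / P by field_simp, abs_div, abs_of_pos hP,
    div_le_div_iff_of_pos_right hP]

lemma IsGoodAbscissa.contour_bounds {p : ℕ} (hp : 0 < p) {α γ u θ : ℝ}
    (hγ : cos γ = (-1) ^ p * cos (p * α)) (hu : IsGoodAbscissa γ u)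
    (huθ : π / 4 ≤ |u - p * θ|) :
    (∀ χ : ℝ, (Lam p α χ = 0 ∨ ∃ n : ℤ, χ = n * π / p) → π / (4 * p) ≤ |u / p - χ|) ∧
      π / (4 * p) ≤ |u / p - θ| ∧
      ∀ c : ℝ, π ^ 3 / (512 * p) ≤
        ‖LamC p α ((u / p : ℝ) + c * Complex.I)‖ * ‖((u / p : ℝ) : ℂ) + c * Complex.I - θ‖ := by
  have hP : (0 : ℝ) < p := by exact_mod_cast hp
  have hdist (χ : ℝ) (h : π / 4 ≤ |u - p * χ|) : π / (4 * p) ≤ |u / p - χ| := by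
    rwa [← div_div, div_le_abs_div_sub_iff hP]
  refine ⟨fun χ hχ => hdist χ (hu _ ?_), hdist θ huθ, fun c => ?_⟩
  · rcases hχ with h | ⟨n, rfl⟩
    · exact Or.inr (by rw [Lam] at h; linarith)
    · exact Or.inl (by rw [mul_div_cancel₀ _ hP.ne', sin_int_mul_pi])
  set z : ℂ := ((u / p : ℝ) : ℂ) + c * Complex.I
  have hΛ : LamC p α z = Complex.cos (p * z) - Complex.cos γ := by
    rw [LamC, ← Complex.ofReal_cos, hγ]
    push_cast
    rfl
  have hre : (p * z).re = u := by
    simp [z, mul_div_cancel₀ _ hP.ne']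
  have h₁ : 1 / 8 ≤ ‖LamC p α z‖ := hΛ ▸ (hre ▸ hu).one_div_eight_le_norm_cos_sub_cos
  have h₂ : π / (4 * p) ≤ ‖z - θ‖ :=
    (hdist θ huθ).trans (by simpa [z] using Complex.abs_re_le_norm (z - θ))
  have hπ : π ^ 2 ≤ 16 := by nlinarith [pi_le_four, pi_pos]
  calc π ^ 3 / (512 * p) = π ^ 2 / 16 * (1 / 8 * (π / (4 * p))) := by field_simp; ring
    _ ≤ 1 * (1 / 8 * (π / (4 * p))) := by gcongr; linarith
    _ ≤ ‖LamC p α z‖ * ‖z - θ‖ := by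
      rw [one_mul]; exact mul_le_mul h₁ h₂ (by positivity) (norm_nonneg _)

theorem exists_good_vertical_contour_abscissae (p : ℕ) (hp : 0 < p) (θ α : ℝ) :
    ∃ zm zp : ℝ, zm < θ ∧ θ < zp ∧ zp - zm ≤ 5 * π / (2 * p) ∧
      (∀ χ : ℝ, (Lam p α χ = 0 ∨ ∃ n : ℤ, χ = (n : ℝ) * π / p) →
        π / (4 * p) ≤ |zm - χ| ∧ π / (4 * p) ≤ |zp - χ|) ∧
      π / (4 * p) ≤ |zm - θ| ∧ π / (4 * p) ≤ |zp - θ| ∧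
      (∀ c : ℝ, ∀ z ∈ ({zm, zp} : Set ℝ),
        π ^ 3 / (512 * p) ≤
          ‖LamC p α ((z : ℂ) + c * Complex.I)‖ *
            ‖(z : ℂ) + c * Complex.I - (θ : ℂ)‖) := by
  have hP : (0 : ℝ) < p := by exact_mod_cast hp
  have hβ : |(-1) ^ p * cos (p * α)| ≤ 1 := by
    simpa only [abs_mul, abs_pow, abs_neg, abs_one, one_pow, one_mul] using abs_cos_le_one _
  have hγ := cos_arccos (abs_le.1 hβ).1 (abs_le.1 hβ).2
  obtain ⟨x, y, hx, hy, hxθ, hyθ, hxy⟩ :=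
    exists_isGoodAbscissa_bracket ⟨arccos_nonneg _, arccos_le_pi _⟩ (p * θ)
  obtain ⟨hxχ, hxθ', hxc⟩ := hx.contour_bounds hp hγ (θ := θ) (le_abs.2 (Or.inr (by linarith)))
  obtain ⟨hyχ, hyθ', hyc⟩ := hy.contour_bounds hp hγ (θ := θ) (le_abs.2 (Or.inl (by linarith)))
  refine ⟨x / p, y / p, ?_, ?_, ?_, fun χ hχ => ⟨hxχ χ hχ, hyχ χ hχ⟩, hxθ', hyθ', ?_⟩
  · rw [div_lt_iff₀ hP]; linarith [pi_pos]
  · rw [lt_div_iff₀ hP]; linarith [pi_pos]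
  · rw [← sub_div, div_le_div_iff₀ hP (by positivity)]; nlinarith [pi_pos]
  · rintro c z (rfl | rfl)
    exacts [hxc c, hyc c]
end

section
/- (Residue evaluation of the embedding contour integral.) Let p be a positive integer and α ∈ ℝ. Let R ⊂ ℂ be a closed axis-parallel rectangle with positively oriented boundary γ, let θ be in the interior of R with Λ(θ,α) ≠ 0, and suppose χ₁ ≠ χ₂ are the only zeros of Λ(·,α) in R, both lying in the interior of R, with sin(p χ₁) ≠ 0 and sin(p χ₂) ≠ 0. Then for every function f holomorphic on an open set containing R, (1/(2πi)) ∮_γ f(z) / (Λ(z,α)(z − θ)) dz = f(θ)/Λ(θ,α) − f(χ₁)/(p (χ₁ − θ) sin(p χ₁)) − f(χ₂)/(p (χ₂ − θ) sin(p χ₂)). -/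
open Real

/-- The closed axis-parallel rectangle `[a, a'] × [b, b'] ⊂ ℂ`. -/
def closedRect (a a' b b' : ℝ) : Set ℂ :=
  {z : ℂ | z.re ∈ Set.Icc a a' ∧ z.im ∈ Set.Icc b b'}

/-- The contour integral of `f` along the positively oriented (anticlockwise) boundary of
the axis-parallel rectangle `[a, a'] × [b, b'] ⊂ ℂ`: the sum of the four oriented
edge integrals. -/
noncomputable def rectIntegral (a a' b b' : ℝ) (f : ℂ → ℂ) : ℂ :=
  ((∫ x : ℝ in a..a', f ((x : ℂ) + (b : ℂ) * Complex.I)) -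
    ∫ x : ℝ in a..a', f ((x : ℂ) + (b' : ℂ) * Complex.I)) +
  Complex.I * ((∫ y : ℝ in b..b', f ((a' : ℂ) + (y : ℂ) * Complex.I)) -
    ∫ y : ℝ in b..b', f ((a : ℂ) + (y : ℂ) * Complex.I))

/-!
Put `ψ z = Λ(z, α) (z - θ)`. In the rectangle its zeros are `θ, χ₁, χ₂`, all simple, with
`ψ' θ = Λ(θ, α)` and `ψ' χᵢ = -p sin(p χᵢ) (χᵢ - θ)`, so `f / ψ` has simple poles there with
residues `f w / ψ' w`. Subtracting the principal parts leaves a function with removable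
singularities, whose boundary integral vanishes by Cauchy–Goursat, and the boundary integral of
each `(z - w)⁻¹` is `2πi`, as one sees from branches of `log (z - w)` along the four edges.
-/

open Set Filter Topology Complex intervalIntegral
open MeasureTheory (volume)

def rectBoundary (a a' b b' : ℝ) : Set ℂ :=
  closedRect a a' b b' \ Ioo a a' ×ℂ Ioo b b'

section RectIntegral

variable {a a' b b' : ℝ}

lemma Ioo_reProdIm_Ioo_subset_closedRect : Ioo a a' ×ℂ Ioo b b' ⊆ closedRect a a' b b' :=
  fun _ hz => ⟨Ioo_subset_Icc_self hz.1, Ioo_subset_Icc_self hz.2⟩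

lemma mapsTo_horizontal_edge (hab : a ≤ a') (hbb : b ≤ b') {t : ℝ} (ht : t = b ∨ t = b') :
    MapsTo (fun x : ℝ => (x : ℂ) + t * I) (uIcc a a') (rectBoundary a a' b b') := by
  intro x hx
  rw [uIcc_of_le hab] at hx
  rcases ht with rfl | rfl <;>
    simp [rectBoundary, closedRect, mem_reProdIm, hx.1, hx.2, hbb]

lemma mapsTo_vertical_edge (hab : a ≤ a') (hbb : b ≤ b') {s : ℝ} (hs : s = a ∨ s = a') :
    MapsTo (fun y : ℝ => (s : ℂ) + y * I) (uIcc b b') (rectBoundary a a' b b') := by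
  intro y hy
  rw [uIcc_of_le hbb] at hy
  rcases hs with rfl | rfl <;>
    simp [rectBoundary, closedRect, mem_reProdIm, hy.1, hy.2, hab]

lemma ContinuousOn.intervalIntegrable_horizontal_edge {F : ℂ → ℂ}
    (hF : ContinuousOn F (rectBoundary a a' b b')) (hab : a ≤ a') (hbb : b ≤ b') {t : ℝ}
    (ht : t = b ∨ t = b') :
    IntervalIntegrable (fun x : ℝ => F (x + t * I)) volume a a' :=
  (hF.comp (by fun_prop) (mapsTo_horizontal_edge hab hbb ht)).intervalIntegrable

lemma ContinuousOn.intervalIntegrable_vertical_edge {F : ℂ → ℂ}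
    (hF : ContinuousOn F (rectBoundary a a' b b')) (hab : a ≤ a') (hbb : b ≤ b') {s : ℝ}
    (hs : s = a ∨ s = a') :
    IntervalIntegrable (fun y : ℝ => F (s + y * I)) volume b b' :=
  (hF.comp (by fun_prop) (mapsTo_vertical_edge hab hbb hs)).intervalIntegrable

lemma rectIntegral_congr (hab : a ≤ a') (hbb : b ≤ b') {F G : ℂ → ℂ}
    (h : EqOn F G (rectBoundary a a' b b')) :
    rectIntegral a a' b b' F = rectIntegral a a' b b' G := by
  have horizontal (t : ℝ) (ht : t = b ∨ t = b') :=
    integral_congr (μ := volume) fun x hx =>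
      h (mapsTo_horizontal_edge hab hbb ht hx)
  have vertical (s : ℝ) (hs : s = a ∨ s = a') :=
    integral_congr (μ := volume) fun y hy =>
      h (mapsTo_vertical_edge hab hbb hs hy)
  simp only [rectIntegral, horizontal b (.inl rfl), horizontal b' (.inr rfl),
    vertical a (.inl rfl), vertical a' (.inr rfl)]

lemma rectIntegral_sub (hab : a ≤ a') (hbb : b ≤ b') {F G : ℂ → ℂ}
    (hF : ContinuousOn F (rectBoundary a a' b b'))
    (hG : ContinuousOn G (rectBoundary a a' b b')) :
    rectIntegral a a' b b' (fun z => F z - G z) =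
      rectIntegral a a' b b' F - rectIntegral a a' b b' G := by
  simp only [rectIntegral]
  rw [integral_sub (hF.intervalIntegrable_horizontal_edge hab hbb (.inl rfl))
      (hG.intervalIntegrable_horizontal_edge hab hbb (.inl rfl)),
    integral_sub (hF.intervalIntegrable_horizontal_edge hab hbb (.inr rfl))
      (hG.intervalIntegrable_horizontal_edge hab hbb (.inr rfl)),
    integral_sub (hF.intervalIntegrable_vertical_edge hab hbb (.inr rfl))
      (hG.intervalIntegrable_vertical_edge hab hbb (.inr rfl)),
    integral_sub (hF.intervalIntegrable_vertical_edge hab hbb (.inl rfl))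
      (hG.intervalIntegrable_vertical_edge hab hbb (.inl rfl))]
  ring

lemma rectIntegral_finsetSum (hab : a ≤ a') (hbb : b ≤ b') {ι : Type*} (s : Finset ι)
    {F : ι → ℂ → ℂ} (hF : ∀ i ∈ s, ContinuousOn (F i) (rectBoundary a a' b b')) :
    rectIntegral a a' b b' (fun z => ∑ i ∈ s, F i z) =
      ∑ i ∈ s, rectIntegral a a' b b' (F i) := by
  simp only [rectIntegral]
  rw [integral_finsetSum fun i hi =>
      (hF i hi).intervalIntegrable_horizontal_edge hab hbb (.inl rfl),
    integral_finsetSum fun i hi =>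
      (hF i hi).intervalIntegrable_horizontal_edge hab hbb (.inr rfl),
    integral_finsetSum fun i hi =>
      (hF i hi).intervalIntegrable_vertical_edge hab hbb (.inr rfl),
    integral_finsetSum fun i hi =>
      (hF i hi).intervalIntegrable_vertical_edge hab hbb (.inl rfl)]
  simp only [← Finset.sum_sub_distrib, Finset.mul_sum, ← Finset.sum_add_distrib]

lemma rectIntegral_const_mul (c : ℂ) (F : ℂ → ℂ) :
    rectIntegral a a' b b' (fun z => c * F z) = c * rectIntegral a a' b b' F := by
  simp only [rectIntegral, integral_const_mul]
  ring

lemma rectIntegral_eq_zero_of_differentiableAt_off_countable (hab : a ≤ a') (hbb : b ≤ b')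
    {F : ℂ → ℂ} {s : Set ℂ} (hs : s.Countable) (hc : ContinuousOn F (closedRect a a' b b'))
    (hd : ∀ z ∈ Ioo a a' ×ℂ Ioo b b' \ s, DifferentiableAt ℂ F z) :
    rectIntegral a a' b b' F = 0 := by
  have key := integral_boundary_rect_eq_zero_of_differentiable_on_off_countable F
    ⟨a, b⟩ ⟨a', b'⟩ s hs
    (by rw [uIcc_of_le hab, uIcc_of_le hbb]; exact hc)
    (by simpa [min_eq_left hab, max_eq_right hab, min_eq_left hbb, max_eq_right hbb] using hd)
  simp only [smul_eq_mul] at key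
  rw [rectIntegral, ← key]
  ring

end RectIntegral

section PoleIntegral

variable {a a' b b' : ℝ}

lemma integral_horizontal_eq_sub {F f : ℂ → ℂ} {t : ℝ}
    (hF : ∀ x ∈ uIcc a a', HasDerivAt F (f (x + t * I)) (x + t * I))
    (hf : IntervalIntegrable (fun x : ℝ => f (x + t * I)) volume a a') :
    ∫ x : ℝ in a..a', f (x + t * I) = F (a' + t * I) - F (a + t * I) :=
  integral_eq_sub_of_hasDerivAt (f := fun x : ℝ => F (x + t * I))
    (fun x hx => ((hF x hx).comp_add_const (x : ℂ) _).comp_ofReal) hf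

lemma I_mul_integral_vertical_eq_sub {F f : ℂ → ℂ} {s : ℝ}
    (hF : ∀ y ∈ uIcc b b', HasDerivAt F (f (s + y * I)) (s + y * I))
    (hf : IntervalIntegrable (fun y : ℝ => f (s + y * I)) volume b b') :
    I * ∫ y : ℝ in b..b', f (s + y * I) = F (s + b' * I) - F (s + b * I) := by
  have hline (y : ℝ) : HasDerivAt (fun z : ℂ => s + z * I) I y := by
    simpa using ((hasDerivAt_id (y : ℂ)).mul_const I).const_add (s : ℂ)
  rw [← integral_const_mul]
  refine integral_eq_sub_of_hasDerivAt (f := fun y : ℝ => F (s + y * I))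
    (fun y hy => ?_) (hf.const_mul I)
  simpa [mul_comm I] using ((hF y hy).comp (y : ℂ) (hline y)).comp_ofReal

lemma hasDerivAt_log_mul_sub {c w z : ℂ} (h : c * (z - w) ∈ slitPlane) :
    HasDerivAt (fun z => log (c * (z - w))) (z - w)⁻¹ z := by
  refine ((hasDerivAt_log h).comp z
    (((hasDerivAt_id z).sub_const w).const_mul c)).congr_deriv ?_
  field_simp [left_ne_zero_of_mul (slitPlane_ne_zero h)]

lemma log_mul_eq_log_mul_sub_pi_div_two_mul_I {c c' u : ℂ} (hc : c' = -I * c)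
    (hu : 0 < (c * u).re) : log (c' * u) = log (c * u) - π / 2 * I := by
  have hcu : c * u ≠ 0 := fun h => by simp [h] at hu
  have harg := abs_lt.1 (abs_arg_lt_pi_div_two_iff.2 (.inl hu))
  rw [hc, mul_assoc, log_mul (by simp) hcu, log_neg_I]
  · ring
  · rw [arg_neg_I]; constructor <;> linarith [pi_pos]

/- On the bottom, right, top and left edges, `log (c * (z - w))` with `c = I, 1, -I, -1`
respectively is a primitive of `(z - w)⁻¹`; at each corner the two adjacent branches differ
by `π / 2 * I`. -/
lemma rectIntegral_sub_inv {w : ℂ} (hw : w ∈ Ioo a a' ×ℂ Ioo b b') :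
    rectIntegral a a' b b' (fun z => (z - w)⁻¹) = 2 * π * I := by
  obtain ⟨⟨ha, ha'⟩, hb, hb'⟩ := hw
  have hab : a ≤ a' := by linarith
  have hbb : b ≤ b' := by linarith
  have hcont : ContinuousOn (fun z => (z - w)⁻¹) (rectBoundary a a' b b') :=
    ContinuousOn.inv₀ (by fun_prop) fun z hz => sub_ne_zero.2 fun hzw =>
      hz.2 (hzw ▸ ⟨⟨ha, ha'⟩, hb, hb'⟩)
  have hbot := integral_horizontal_eq_sub (F := fun z => log (I * (z - w)))
    (f := fun z => (z - w)⁻¹) (t := b)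
    (fun x _ => hasDerivAt_log_mul_sub (.inl (by simp; linarith)))
    (hcont.intervalIntegrable_horizontal_edge hab hbb (.inl rfl))
  have htop := integral_horizontal_eq_sub (F := fun z => log (-I * (z - w)))
    (f := fun z => (z - w)⁻¹) (t := b')
    (fun x _ => hasDerivAt_log_mul_sub (.inl (by simp; linarith)))
    (hcont.intervalIntegrable_horizontal_edge hab hbb (.inr rfl))
  have hright := I_mul_integral_vertical_eq_sub (F := fun z => log (1 * (z - w)))
    (f := fun z => (z - w)⁻¹) (s := a')
    (fun y _ => hasDerivAt_log_mul_sub (.inl (by simp; linarith)))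
    (hcont.intervalIntegrable_vertical_edge hab hbb (.inr rfl))
  have hleft := I_mul_integral_vertical_eq_sub (F := fun z => log (-1 * (z - w)))
    (f := fun z => (z - w)⁻¹) (s := a)
    (fun y _ => hasDerivAt_log_mul_sub (.inl (by simp; linarith)))
    (hcont.intervalIntegrable_vertical_edge hab hbb (.inl rfl))
  have c₁ := log_mul_eq_log_mul_sub_pi_div_two_mul_I (c := -1) (c' := I)
    (u := a + b * I - w) (by simp) (by simp; linarith)
  have c₂ := log_mul_eq_log_mul_sub_pi_div_two_mul_I (c := I) (c' := 1)
    (u := a' + b * I - w) (by simp) (by simp; linarith)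
  have c₃ := log_mul_eq_log_mul_sub_pi_div_two_mul_I (c := 1) (c' := -I)
    (u := a' + b' * I - w) (by simp) (by simp; linarith)
  have c₄ := log_mul_eq_log_mul_sub_pi_div_two_mul_I (c := -I) (c' := -1)
    (u := a + b' * I - w) (by simp) (by simp; linarith)
  rw [rectIntegral, mul_sub, hbot, htop, hright, hleft]
  linear_combination -(c₁ + c₂ + c₃ + c₄)

end PoleIntegral

lemma tendsto_div_sub_mul_inv_of_differentiableAt {G : ℂ → ℂ} {w : ℂ}
    (hG : DifferentiableAt ℂ G w) :
    Tendsto (fun z => G z / (z - w) - G w * (z - w)⁻¹) (𝓝[≠] w) (𝓝 (deriv G w)) :=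
  (hasDerivAt_iff_tendsto_slope.1 hG.hasDerivAt).congr fun z => by rw [slope_def_field]; ring

lemma exists_tendsto_div_sub_residue {φ ψ : ℂ → ℂ} {w : ℂ}
    (hφ : DifferentiableAt ℂ φ w) (hψ : ∀ᶠ z in 𝓝 w, DifferentiableAt ℂ ψ z) (hψw : ψ w = 0)
    (hψ' : deriv ψ w ≠ 0) :
    ∃ L, Tendsto (fun z => φ z / ψ z - φ w / deriv ψ w * (z - w)⁻¹) (𝓝[≠] w) (𝓝 L) := by
  obtain ⟨s, hs, hψs⟩ := hψ.exists_mem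
  have hQ : DifferentiableAt ℂ (dslope ψ w) w :=
    ((differentiableOn_dslope hs).2 fun z hz =>
      (hψs z hz).differentiableWithinAt).differentiableAt hs
  have hfactor (z : ℂ) : ψ z = (z - w) * dslope ψ w z := by
    rw [← smul_eq_mul, sub_smul_dslope, hψw, sub_zero]
  have hG : DifferentiableAt ℂ (fun z => φ z / dslope ψ w z) w :=
    hφ.div hQ (by rwa [dslope_same])
  refine ⟨_, (tendsto_div_sub_mul_inv_of_differentiableAt hG).congr fun z => ?_⟩
  rw [hfactor, dslope_same, div_div, mul_comm (dslope ψ w z)]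

section Residues

variable {a a' b b' : ℝ}

lemma rectIntegral_eq_zero_of_tendsto_nhdsNE {h : ℂ → ℂ} {S : Finset ℂ} (hab : a ≤ a')
    (hbb : b ≤ b') (hS : ↑S ⊆ Ioo a a' ×ℂ Ioo b b')
    (hd : ∀ z ∈ closedRect a a' b b', z ∉ S → DifferentiableAt ℂ h z)
    (hlim : ∀ w ∈ S, ∃ L, Tendsto h (𝓝[≠] w) (𝓝 L)) :
    rectIntegral a a' b b' h = 0 := by
  set H : ℂ → ℂ := fun z => if z ∈ S then limUnder (𝓝[≠] z) h else h z
  have hH_nhdsNE (w : ℂ) : H =ᶠ[𝓝[≠] w] h := by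
    filter_upwards [nhdsNE_of_nhdsNE_sdiff_finite univ_mem (s := (S : Set ℂ)) inferInstance]
      with z hz
    simp [H, show z ∉ S from hz.2]
  have hH_nhds {z : ℂ} (hz : z ∉ S) : H =ᶠ[𝓝 z] h := by
    filter_upwards [S.finite_toSet.isClosed.isOpen_compl.mem_nhds hz] with y hy
    simp [H, show y ∉ S from hy]
  have hcont : ContinuousOn H (closedRect a a' b b') := by
    intro z hz
    by_cases hzS : z ∈ S
    · obtain ⟨L, hL⟩ := hlim z hzS
      refine (continuousWithinAt_compl_self.1 ?_).continuousWithinAt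
      simpa [ContinuousWithinAt, H, hzS, hL.limUnder_eq] using hL.congr' (hH_nhdsNE z).symm
    · exact ((hd z hz hzS).continuousAt.congr (hH_nhds hzS).symm).continuousWithinAt
  calc rectIntegral a a' b b' h = rectIntegral a a' b b' H :=
        rectIntegral_congr hab hbb fun z hz =>
          ((hH_nhds fun hzS => hz.2 (hS hzS)).self_of_nhds).symm
    _ = 0 := rectIntegral_eq_zero_of_differentiableAt_off_countable hab hbb
        S.countable_toSet hcont fun z hz =>
          (hd z (Ioo_reProdIm_Ioo_subset_closedRect hz.1) hz.2).congr_of_eventuallyEq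
            (hH_nhds hz.2)

theorem rectIntegral_eq_two_pi_I_mul_sum_residues {g : ℂ → ℂ} {S : Finset ℂ} {r : ℂ → ℂ}
    (hab : a ≤ a') (hbb : b ≤ b') (hS : ↑S ⊆ Ioo a a' ×ℂ Ioo b b')
    (hd : ∀ z ∈ closedRect a a' b b', z ∉ S → DifferentiableAt ℂ g z)
    (hres : ∀ w ∈ S, ∃ L, Tendsto (fun z => g z - r w * (z - w)⁻¹) (𝓝[≠] w) (𝓝 L)) :
    rectIntegral a a' b b' g = 2 * π * I * ∑ w ∈ S, r w := by
  have hpole_cont {v z : ℂ} (hzv : z ≠ v) : ContinuousAt (fun z => r v * (z - v)⁻¹) z :=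
    continuousAt_const.mul ((continuousAt_id.sub continuousAt_const).inv₀ (sub_ne_zero.2 hzv))
  have hoff {z : ℂ} (hz : z ∈ rectBoundary a a' b b') : z ∉ S := fun hzS => hz.2 (hS hzS)
  have hg : ContinuousOn g (rectBoundary a a' b b') := fun z hz =>
    (hd z hz.1 (hoff hz)).continuousAt.continuousWithinAt
  have hpoles : ∀ v ∈ S, ContinuousOn (fun z => r v * (z - v)⁻¹) (rectBoundary a a' b b') :=
    fun v hv z hz => (hpole_cont fun h => hoff hz (by rwa [h])).continuousWithinAt
  have hzero : rectIntegral a a' b b' (fun z => g z - ∑ v ∈ S, r v * (z - v)⁻¹) = 0 := by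
    refine rectIntegral_eq_zero_of_tendsto_nhdsNE hab hbb hS (fun z hz hzS => ?_) fun w hw => ?_
    · refine (hd z hz hzS).sub (DifferentiableAt.fun_sum fun v hv => ?_)
      exact (differentiableAt_const _).mul ((differentiableAt_id.sub_const v).inv
        (sub_ne_zero.2 fun h : z = v => hzS (by rwa [h])))
    · obtain ⟨L, hL⟩ := hres w hw
      have hrest := tendsto_finsetSum (S.erase w) fun v hv =>
        (hpole_cont (Finset.ne_of_mem_erase hv).symm).tendsto.mono_left
          (nhdsWithin_le_nhds (s := {w}ᶜ))
      refine ⟨_, (hL.sub hrest).congr fun z => ?_⟩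
      rw [← Finset.add_sum_erase S _ hw]
      ring
  rw [rectIntegral_sub hab hbb hg (continuousOn_finsetSum S hpoles),
    rectIntegral_finsetSum hab hbb S hpoles, sub_eq_zero] at hzero
  rw [hzero, Finset.mul_sum]
  refine Finset.sum_congr rfl fun w hw => ?_
  rw [rectIntegral_const_mul, rectIntegral_sub_inv (hS hw), mul_comm]

theorem rectIntegral_div_eq_two_pi_I_mul_sum {φ ψ : ℂ → ℂ} {S : Finset ℂ}
    (hab : a ≤ a') (hbb : b ≤ b') (hS : ↑S ⊆ Ioo a a' ×ℂ Ioo b b')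
    (hφ : ∀ z ∈ closedRect a a' b b', DifferentiableAt ℂ φ z)
    (hψ : ∀ z ∈ closedRect a a' b b', DifferentiableAt ℂ ψ z)
    (hzeros : ∀ z ∈ closedRect a a' b b', ψ z = 0 ↔ z ∈ S)
    (hsimple : ∀ w ∈ S, deriv ψ w ≠ 0) :
    rectIntegral a a' b b' (fun z => φ z / ψ z) =
      2 * π * I * ∑ w ∈ S, φ w / deriv ψ w := by
  have hopen := Ioo_reProdIm_Ioo_subset_closedRect (a := a) (a' := a') (b := b) (b' := b')
  refine rectIntegral_eq_two_pi_I_mul_sum_residues hab hbb hS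
    (fun z hz hzS => (hφ z hz).div (hψ z hz) fun h => hzS ((hzeros z hz).1 h)) fun w hw => ?_
  have hw' := hopen (hS hw)
  refine exists_tendsto_div_sub_residue (hφ w hw') ?_ ((hzeros w hw').2 hw) (hsimple w hw)
  filter_upwards [(isOpen_Ioo.reProdIm isOpen_Ioo).mem_nhds (hS hw)] with z hz
  exact hψ z (hopen hz)

end Residues

lemma hasDerivAt_LamC (p : ℕ) (α : ℝ) (z : ℂ) :
    HasDerivAt (LamC p α) (-(p * sin (p * z))) z := by
  refine (((hasDerivAt_id z).const_mul (p : ℂ)).ccos.sub_const _).congr_deriv ?_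
  simp [mul_comm]

lemma deriv_LamC_mul_sub (p : ℕ) (α : ℝ) (θ z : ℂ) :
    deriv (fun z => LamC p α z * (z - θ)) z = -(p * sin (p * z)) * (z - θ) + LamC p α z := by
  rw [((hasDerivAt_LamC p α z).fun_mul ((hasDerivAt_id' z).sub_const θ)).deriv]
  simp

theorem residue_evaluation_of_embedding_contour_integral
    (p : ℕ) (hp : 0 < p) (α : ℝ)
    (a a' bb bb' : ℝ) (hab : a < a') (hbb : bb < bb')
    (θ χ₁ χ₂ : ℂ)
    (hθ : θ.re ∈ Set.Ioo a a' ∧ θ.im ∈ Set.Ioo bb bb')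
    (hΛθ : LamC p α θ ≠ 0)
    (hne : χ₁ ≠ χ₂)
    (hχ₁ : χ₁.re ∈ Set.Ioo a a' ∧ χ₁.im ∈ Set.Ioo bb bb')
    (hχ₂ : χ₂.re ∈ Set.Ioo a a' ∧ χ₂.im ∈ Set.Ioo bb bb')
    (hzeros : ∀ z ∈ closedRect a a' bb bb', (LamC p α z = 0 ↔ z = χ₁ ∨ z = χ₂))
    (hs₁ : Complex.sin ((p : ℂ) * χ₁) ≠ 0)
    (hs₂ : Complex.sin ((p : ℂ) * χ₂) ≠ 0)
    (f : ℂ → ℂ) (U : Set ℂ) (hU : IsOpen U)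
    (hRU : closedRect a a' bb bb' ⊆ U)
    (hf : DifferentiableOn ℂ f U) :
    (1 / (2 * (π : ℂ) * Complex.I)) * rectIntegral a a' bb bb'
        (fun z => f z / (LamC p α z * (z - θ)))
      = f θ / LamC p α θ
        - f χ₁ / ((p : ℂ) * (χ₁ - θ) * Complex.sin ((p : ℂ) * χ₁))
        - f χ₂ / ((p : ℂ) * (χ₂ - θ) * Complex.sin ((p : ℂ) * χ₂)) := by
  have hΛχ₁ : LamC p α χ₁ = 0 :=
    (hzeros χ₁ (Ioo_reProdIm_Ioo_subset_closedRect hχ₁)).2 (.inl rfl)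
  have hΛχ₂ : LamC p α χ₂ = 0 :=
    (hzeros χ₂ (Ioo_reProdIm_Ioo_subset_closedRect hχ₂)).2 (.inr rfl)
  have hθχ₁ : θ ≠ χ₁ := by rintro rfl; exact hΛθ hΛχ₁
  have hθχ₂ : θ ≠ χ₂ := by rintro rfl; exact hΛθ hΛχ₂
  have hp' : (p : ℂ) ≠ 0 := Nat.cast_ne_zero.2 hp.ne'
  have hderiv (χ : ℂ) (hχ : LamC p α χ = 0) :
      deriv (fun z => LamC p α z * (z - θ)) χ = -(p * sin (p * χ)) * (χ - θ) := by
    rw [deriv_LamC_mul_sub, hχ, add_zero]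
  have hderivθ : deriv (fun z => LamC p α z * (z - θ)) θ = LamC p α θ := by
    rw [deriv_LamC_mul_sub, sub_self, mul_zero, zero_add]
  have hresidues := rectIntegral_div_eq_two_pi_I_mul_sum (S := {θ, χ₁, χ₂}) (φ := f)
    (ψ := fun z => LamC p α z * (z - θ)) hab.le hbb.le
    (by simpa [insert_subset_iff] using ⟨hθ, hχ₁, hχ₂⟩)
    (fun z hz => hf.differentiableAt (hU.mem_nhds (hRU hz)))
    (fun z _ => ((hasDerivAt_LamC p α z).differentiableAt.mul (by fun_prop)))
    (fun z hz => by simp [hzeros z hz, sub_eq_zero]; tauto)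
    (by simp [hderivθ, hderiv χ₁ hΛχ₁, hderiv χ₂ hΛχ₂, hΛθ, hp', hs₁, hs₂, sub_eq_zero,
      hθχ₁.symm, hθχ₂.symm])
  rw [hresidues, Finset.sum_insert (by simp [hθχ₁, hθχ₂]), Finset.sum_pair hne, hderivθ,
    hderiv χ₁ hΛχ₁, hderiv χ₂ hΛχ₂]
  field_simp
  ring
end

section
/- (Truncated-SVD residual bound, Lemma 3.1.) Let n be a positive integer and δ ≥ 0. Let A ∈ ℂ^{n×n} admit a singular value decomposition A = U Σ V*, where U, V ∈ ℂ^{n×n} are unitary and Σ is diagonal with real nonnegative diagonal entries σ₁, …, σ_n. Define the diagonal matrix Σ† whose i-th diagonal entry is 1/σ_i if σ_i > δ and 0 if σ_i ≤ δ, and set A† := V Σ† U*. Then for every d ∈ ℂⁿ and every v ∈ ℂⁿ, ‖d − A (A† d)‖₂ ≤ ‖d − A v‖₂ + δ ‖v‖₂, where ‖·‖₂ denotes the Euclidean norm on ℂⁿ. -/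
open Matrix

/-- The Euclidean (ℓ²) norm on `Fin n → ℂ`. -/
noncomputable def enorm2 {n : ℕ} (x : Fin n → ℂ) : ℝ :=
  Real.sqrt (∑ i, ‖x i‖ ^ 2)

/-!
Write `d = U x` and `v = V u`. Since `U` and `V` are isometries, the residual `d - A A† d` has
the norm of the part of `x` on the coordinates with `σ i ≤ δ`, while `d - A v` has the norm of
`x - Σ u`. On those coordinates `x i = (x i - σ i u i) + σ i u i` with `‖σ i u i‖ ≤ δ ‖u i‖`,
so the triangle inequality in `ℓ²` gives the bound.
-/

section Enorm2

variable {n : ℕ}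

theorem enorm2_eq_norm_toLp (x : Fin n → ℂ) :
    enorm2 x = ‖(WithLp.toLp 2 x : EuclideanSpace ℂ (Fin n))‖ := by
  rw [EuclideanSpace.norm_eq]
  rfl

theorem enorm2_add_le (x y : Fin n → ℂ) : enorm2 (x + y) ≤ enorm2 x + enorm2 y := by
  simpa only [enorm2_eq_norm_toLp, WithLp.toLp_add] using norm_add_le _ _

theorem enorm2_smul (c : ℂ) (x : Fin n → ℂ) : enorm2 (c • x) = ‖c‖ * enorm2 x := by
  simpa only [enorm2_eq_norm_toLp, WithLp.toLp_smul] using norm_smul _ _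

theorem enorm2_le_of_forall_norm_le {x y : Fin n → ℂ} (h : ∀ i, ‖x i‖ ≤ ‖y i‖) :
    enorm2 x ≤ enorm2 y :=
  Real.sqrt_le_sqrt <| Finset.sum_le_sum fun i _ => pow_le_pow_left₀ (norm_nonneg _) (h i) 2

theorem enorm2_mulVec_of_conjTranspose_mul_self {U : Matrix (Fin n) (Fin n) ℂ}
    (hU : Uᴴ * U = 1) (x : Fin n → ℂ) : enorm2 (U *ᵥ x) = enorm2 x := by
  have hinner : star (U *ᵥ x) ⬝ᵥ (U *ᵥ x) = star x ⬝ᵥ x := by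
    rw [star_mulVec, dotProduct_mulVec, vecMul_vecMul, hU, vecMul_one]
  rw [enorm2_eq_norm_toLp, enorm2_eq_norm_toLp, ← sq_eq_sq₀ (norm_nonneg _) (norm_nonneg _),
    @norm_sq_eq_re_inner ℂ, @norm_sq_eq_re_inner ℂ, EuclideanSpace.inner_toLp_toLp,
    EuclideanSpace.inner_toLp_toLp, dotProduct_comm, hinner, dotProduct_comm]

end Enorm2

theorem mul_mul_mulVec_mulVec_of_mul_eq_one {m k l p R : Type*} [Fintype k] [Fintype l]
    [Fintype p] [DecidableEq l] [Semiring R] (W : Matrix m k R) (D : Matrix k l R)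
    {Z' : Matrix l p R} {Z : Matrix p l R} (h : Z' * Z = 1) (u : l → R) :
    (W * D * Z') *ᵥ (Z *ᵥ u) = W *ᵥ (D *ᵥ u) := by
  rw [mulVec_mulVec, Matrix.mul_assoc, h, Matrix.mul_one, mulVec_mulVec]

section TruncatedSVD

variable {n : ℕ} {δ : ℝ} {σ : Fin n → ℝ}

theorem sub_diagonal_mulVec_truncatedInv (hδ : 0 ≤ δ) (x : Fin n → ℂ) :
    x - diagonal (fun i => (σ i : ℂ)) *ᵥ
        (diagonal (fun i => if δ < σ i then ((σ i)⁻¹ : ℂ) else 0) *ᵥ x) =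
      {i | σ i ≤ δ}.indicator x := by
  ext i
  by_cases hi : δ < σ i
  · have hσi : (σ i : ℂ) ≠ 0 := Complex.ofReal_ne_zero.mpr (hδ.trans_lt hi).ne'
    simp [mulVec_diagonal, hi, hσi]
  · simp [mulVec_diagonal, hi, le_of_not_gt hi]

theorem enorm2_indicator_le_enorm2_sub_add (hδ : 0 ≤ δ) (hσ : ∀ i, 0 ≤ σ i) (x u : Fin n → ℂ) :
    enorm2 ({i | σ i ≤ δ}.indicator x) ≤
      enorm2 (x - diagonal (fun i => (σ i : ℂ)) *ᵥ u) + δ * enorm2 u := by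
  set s := {i | σ i ≤ δ}
  set y := diagonal (fun i => (σ i : ℂ)) *ᵥ u
  have hsplit : s.indicator x = s.indicator (x - y) + s.indicator y := by
    rw [← Set.indicator_add', sub_add_cancel]
  have hy : ∀ i, ‖s.indicator y i‖ ≤ ‖((δ : ℂ) • u) i‖ := by
    intro i
    by_cases hi : i ∈ s
    · simp only [Set.indicator_of_mem hi, y, mulVec_diagonal, Pi.smul_apply, smul_eq_mul,
        norm_mul, Complex.norm_real, Real.norm_of_nonneg (hσ i), Real.norm_of_nonneg hδ]
      exact mul_le_mul_of_nonneg_right hi (norm_nonneg _)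
    · simp only [Set.indicator_of_notMem hi, norm_zero]
      positivity
  calc enorm2 (s.indicator x) ≤ enorm2 (s.indicator (x - y)) + enorm2 (s.indicator y) :=
        hsplit ▸ enorm2_add_le _ _
    _ ≤ enorm2 (x - y) + enorm2 ((δ : ℂ) • u) :=
        add_le_add (enorm2_le_of_forall_norm_le fun i => norm_indicator_le_norm_self _ _)
          (enorm2_le_of_forall_norm_le hy)
    _ = enorm2 (x - y) + δ * enorm2 u := by
        rw [enorm2_smul, Complex.norm_real, Real.norm_of_nonneg hδ]

end TruncatedSVD

theorem truncated_SVD_residual_bound_general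
    (n : ℕ) (δ : ℝ) (hδ : 0 ≤ δ)
    (A U V : Matrix (Fin n) (Fin n) ℂ) (σ : Fin n → ℝ)
    (hσ : ∀ i, 0 ≤ σ i)
    (hUunit : U * Uᴴ = 1) (hVunit : V * Vᴴ = 1)
    (hSVD : A = U * Matrix.diagonal (fun i => (σ i : ℂ)) * Vᴴ)
    (Adag : Matrix (Fin n) (Fin n) ℂ)
    (hAdag : Adag = V * Matrix.diagonal
      (fun i => if δ < σ i then ((σ i)⁻¹ : ℂ) else 0) * Uᴴ)
    (d v : Fin n → ℂ) :
    enorm2 (d - A.mulVec (Adag.mulVec d)) ≤ enorm2 (d - A.mulVec v) + δ * enorm2 v := by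
  have hUu : Uᴴ * U = 1 := mul_eq_one_comm.mp hUunit
  have hVu : Vᴴ * V = 1 := mul_eq_one_comm.mp hVunit
  obtain ⟨x, rfl⟩ : ∃ x, U *ᵥ x = d := ⟨Uᴴ *ᵥ d, by rw [mulVec_mulVec, hUunit, one_mulVec]⟩
  obtain ⟨u, rfl⟩ : ∃ u, V *ᵥ u = v := ⟨Vᴴ *ᵥ v, by rw [mulVec_mulVec, hVunit, one_mulVec]⟩
  have hres : U *ᵥ x - A *ᵥ (Adag *ᵥ (U *ᵥ x)) = U *ᵥ {i | σ i ≤ δ}.indicator x := by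
    rw [← sub_diagonal_mulVec_truncatedInv hδ, mulVec_sub, hAdag,
      mul_mul_mulVec_mulVec_of_mul_eq_one _ _ hUu, hSVD,
      mul_mul_mulVec_mulVec_of_mul_eq_one _ _ hVu]
  have hres' : U *ᵥ x - A *ᵥ (V *ᵥ u) = U *ᵥ (x - diagonal (fun i => (σ i : ℂ)) *ᵥ u) := by
    rw [mulVec_sub, hSVD, mul_mul_mulVec_mulVec_of_mul_eq_one _ _ hVu]
  rw [hres, hres', enorm2_mulVec_of_conjTranspose_mul_self hUu,
    enorm2_mulVec_of_conjTranspose_mul_self hUu, enorm2_mulVec_of_conjTranspose_mul_self hVu]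
  exact enorm2_indicator_le_enorm2_sub_add hδ hσ x u

theorem truncated_SVD_residual_bound
    (n : ℕ) (hn : 0 < n) (δ : ℝ) (hδ : 0 ≤ δ)
    (A U V : Matrix (Fin n) (Fin n) ℂ) (σ : Fin n → ℝ)
    (hσ : ∀ i, 0 ≤ σ i)
    (hUunit : U * Uᴴ = 1) (hVunit : V * Vᴴ = 1)
    (hSVD : A = U * Matrix.diagonal (fun i => (σ i : ℂ)) * Vᴴ)
    (Adag : Matrix (Fin n) (Fin n) ℂ)
    (hAdag : Adag = V * Matrix.diagonal
      (fun i => if δ < σ i then ((σ i)⁻¹ : ℂ) else 0) * Uᴴ)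
    (d v : Fin n → ℂ) :
    enorm2 (d - A.mulVec (Adag.mulVec d)) ≤ enorm2 (d - A.mulVec v) + δ * enorm2 v :=
  truncated_SVD_residual_bound_general n δ hδ A U V σ hσ hUunit hVunit hSVD Adag hAdag d v
end
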